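/- Assume σ‖W‖ ≤ √n‖A‖ (operator norms), so that ‖Δ‖ ≤ 3√n‖A‖‖W‖. Then for any X, Y ∈ N_ε, d_F(LX, LY) ≤ (2ε√d + 3σ‖W‖/(√n‖A‖)) · d_F(X,Y). -/

import Mathlib

open MeasureTheory Matrix Filter

namespace GOPP

/-- Frobenius norm of a real matrix. -/
noncomputable def frob {α β : Type*} [Fintype α] [Fintype β] (X : Matrix α β ℝ) : ℝ :=
  Real.sqrt (∑ i, ∑ j, X i j ^ 2)

/-- Euclidean norm of a vector. -/
noncomputable def vnorm {β : Type*} [Fintype β] (v : β → ℝ) : ℝ :=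
  Real.sqrt (∑ j, v j ^ 2)

/-- Operator (spectral) norm: the supremum of ‖Xu‖ over unit vectors u. -/
noncomputable def opNorm {α β : Type*} [Fintype α] [Fintype β] (X : Matrix α β ℝ) : ℝ :=
  sSup {r : ℝ | ∃ u : β → ℝ, vnorm u = 1 ∧ r = vnorm (X.mulVec u)}

/-- Smallest singular value: the infimum of ‖uᵀX‖ over unit vectors u (for a d×m matrix
with d ≤ m this is the d-th largest singular value; for square matrices it is σ_min). -/
noncomputable def sigmaMin {α β : Type*} [Fintype α] [Fintype β] (X : Matrix α β ℝ) : ℝ :=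
  sInf {r : ℝ | ∃ u : α → ℝ, vnorm u = 1 ∧ r = vnorm (Matrix.vecMul u X)}

/-- Condition number κ = σ_max/σ_min. -/
noncomputable def kappa {d m : ℕ} (A : Matrix (Fin d) (Fin m) ℝ) : ℝ :=
  opNorm A / sigmaMin A

/-- Q is an orthogonal matrix. -/
def IsOrth {d : ℕ} (Q : Matrix (Fin d) (Fin d) ℝ) : Prop :=
  Qᵀ * Q = 1 ∧ Q * Qᵀ = 1

/-- Nuclear norm, via the dual characterization ‖M‖_* = max_{Q ∈ O(d)} ⟨Q, M⟩. -/
noncomputable def nuclearNorm {d : ℕ} (M : Matrix (Fin d) (Fin d) ℝ) : ℝ :=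
  sSup {r : ℝ | ∃ Q : Matrix (Fin d) (Fin d) ℝ, IsOrth Q ∧ r = Matrix.trace (Qᵀ * M)}

/-- The i-th d×k block of an (nd)×k block matrix. -/
def blk {n d k : ℕ} (S : Matrix (Fin n × Fin d) (Fin k) ℝ) (i : Fin n) :
    Matrix (Fin d) (Fin k) ℝ :=
  Matrix.of fun a b => S (i, a) b

/-- The i-th diagonal d×d block of an (nd)×(nd) matrix. -/
def dblk {n d : ℕ} (G : Matrix (Fin n × Fin d) (Fin n × Fin d) ℝ) (i : Fin n) :
    Matrix (Fin d) (Fin d) ℝ :=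
  Matrix.of fun a b => G (i, a) (i, b)

/-- S ∈ O(d)^{⊗n}: each of the n d×d blocks of S is orthogonal. -/
def OrthBlocks {n d : ℕ} (S : Matrix (Fin n × Fin d) (Fin d) ℝ) : Prop :=
  ∀ i, IsOrth (blk S i)

/-- Z ∈ ℝ^{nd×d}: the vertical stack of n copies of I_d. -/
def ZStack (n d : ℕ) : Matrix (Fin n × Fin d) (Fin d) ℝ :=
  Matrix.of fun p j => if p.2 = j then 1 else 0

/-- Vertical stack of n given d×k matrices. -/
def stack {n d k : ℕ} (B : Fin n → Matrix (Fin d) (Fin k) ℝ) :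
    Matrix (Fin n × Fin d) (Fin k) ℝ :=
  Matrix.of fun p b => B p.1 p.2 b

/-- d_F(X,Y) = min_{Q ∈ O(d)} ‖X − YQ‖_F. -/
noncomputable def dF {n d : ℕ} (X Y : Matrix (Fin n × Fin d) (Fin d) ℝ) : ℝ :=
  sInf {r : ℝ | ∃ Q, IsOrth Q ∧ r = frob (X - Y * Q)}

/-- R is a polar factor P(X) of X: an orthogonal global minimizer of ‖X − Q‖_F over O(d). -/
def IsPolar {d : ℕ} (X R : Matrix (Fin d) (Fin d) ℝ) : Prop :=
  IsOrth R ∧ ∀ Q : Matrix (Fin d) (Fin d) ℝ, IsOrth Q → frob (X - R) ≤ frob (X - Q)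

/-- S = P_n(X): blockwise polar factor. -/
def IsPolarBlocks {n d : ℕ} (X S : Matrix (Fin n × Fin d) (Fin d) ℝ) : Prop :=
  ∀ i, IsPolar (blk X i) (blk S i)

/-- U collects (an orthonormal basis of the span of) the top d left singular vectors of D:
U has orthonormal columns and maximizes the Ky Fan quantity trace(Uᵀ(DDᵀ)U). -/
def IsTopSingVecs {N : Type*} [Fintype N] {d m : ℕ} (D : Matrix N (Fin m) ℝ)
    (U : Matrix N (Fin d) ℝ) : Prop :=
  Uᵀ * U = 1 ∧ ∀ Q : Matrix N (Fin d) ℝ, Qᵀ * Q = 1 →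
    Matrix.trace (Qᵀ * (D * Dᵀ) * Q) ≤ Matrix.trace (Uᵀ * (D * Dᵀ) * U)

/-- (U, S, V) is a top-d singular triple of D: orthonormal U, V, diagonal nonnegative S,
DV = US, DᵀU = VS, and U spans a top-d left singular subspace. -/
def IsSVDTriple {N : Type*} [Fintype N] {d m : ℕ} (D : Matrix N (Fin m) ℝ)
    (U : Matrix N (Fin d) ℝ) (S : Matrix (Fin d) (Fin d) ℝ)
    (V : Matrix (Fin m) (Fin d) ℝ) : Prop :=
  Vᵀ * V = 1 ∧ (∀ a b, a ≠ b → S a b = 0) ∧ (∀ a, 0 ≤ S a a) ∧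
    D * V = U * S ∧ Dᵀ * U = V * S ∧ IsTopSingVecs D U

/-- The generalized power method sequence with spectral initialization, run on the data
matrix D (so with C = DDᵀ): S⁰ = P_n(U) for top singular vectors U of D, and
S^{t+1} = P_n(C Sᵗ). -/
def IsGPM {n d m : ℕ} (D : Matrix (Fin n × Fin d) (Fin m) ℝ)
    (S : ℕ → Matrix (Fin n × Fin d) (Fin d) ℝ) : Prop :=
  (∃ U, IsTopSingVecs D U ∧ IsPolarBlocks U (S 0)) ∧
    ∀ t, IsPolarBlocks (D * Dᵀ * S t) (S (t + 1))

/-- W^(i): W with its i-th block row replaced by 0. -/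
def mask {n d m : ℕ} (W : Matrix (Fin n × Fin d) (Fin m) ℝ) (i : Fin n) :
    Matrix (Fin n × Fin d) (Fin m) ℝ :=
  Matrix.of fun p b => if p.1 = i then 0 else W p b

/-- The noise matrix Δ = WAᵀZᵀ + ZAWᵀ + σWWᵀ. -/
noncomputable def delta {n d m : ℕ} (A : Matrix (Fin d) (Fin m) ℝ)
    (W : Matrix (Fin n × Fin d) (Fin m) ℝ) (σ : ℝ) :
    Matrix (Fin n × Fin d) (Fin n × Fin d) ℝ :=
  W * Aᵀ * (ZStack n d)ᵀ + ZStack n d * A * Wᵀ + σ • (W * Wᵀ)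

/-- The i-th block column Δ_i = WAᵀ + ZAW_iᵀ + σWW_iᵀ of Δ. -/
noncomputable def deltaCol {n d m : ℕ} (A : Matrix (Fin d) (Fin m) ℝ)
    (W : Matrix (Fin n × Fin d) (Fin m) ℝ) (σ : ℝ) (i : Fin n) :
    Matrix (Fin n × Fin d) (Fin d) ℝ :=
  W * Aᵀ + ZStack n d * A * (blk W i)ᵀ + σ • (W * (blk W i)ᵀ)

/-- The operator L S = C S/(n‖A‖²) with C = ZAAᵀZᵀ + σΔ. -/
noncomputable def Lop {n d m : ℕ} (A : Matrix (Fin d) (Fin m) ℝ)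
    (W : Matrix (Fin n × Fin d) (Fin m) ℝ) (σ : ℝ)
    (S : Matrix (Fin n × Fin d) (Fin d) ℝ) : Matrix (Fin n × Fin d) (Fin d) ℝ :=
  ((n : ℝ) * opNorm A ^ 2)⁻¹ •
    ((ZStack n d * A * Aᵀ * (ZStack n d)ᵀ + σ • delta A W σ) * S)

/-- √(nd) + √m + √(2γ n log n). -/
noncomputable def bnd1 (n d m : ℕ) (γ : ℝ) : ℝ :=
  Real.sqrt ((n : ℝ) * d) + Real.sqrt (m : ℝ) + Real.sqrt (2 * γ * n * Real.log n)

/-- √(nd) + √m + √(2γ log n). -/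
noncomputable def bnd2 (n d m : ℕ) (γ : ℝ) : ℝ :=
  Real.sqrt ((n : ℝ) * d) + Real.sqrt (m : ℝ) + Real.sqrt (2 * γ * Real.log n)

/-- The basin of attraction N_ε. -/
def memNeps {n d : ℕ} (ε : ℝ) (S : Matrix (Fin n × Fin d) (Fin d) ℝ) : Prop :=
  OrthBlocks S ∧ dF S (ZStack n d) ≤ ε * Real.sqrt ((n : ℝ) * d)

/-- The basin of attraction N_{ξ,∞}. -/
def memNxi {n d m : ℕ} (W : Matrix (Fin n × Fin d) (Fin m) ℝ) (γ ξ : ℝ)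
    (S : Matrix (Fin n × Fin d) (Fin d) ℝ) : Prop :=
  OrthBlocks S ∧ ∀ i, frob (blk W i * Wᵀ * S) ≤ ξ * Real.sqrt (d : ℝ) * bnd1 n d m γ ^ 2

/-- The distribution of a matrix with i.i.d. standard Gaussian N(0,1) entries. -/
noncomputable def stdGaussian (ι κ : Type*) [Fintype ι] [Fintype κ] :
    Measure (ι → κ → ℝ) :=
  Measure.pi fun _ : ι => Measure.pi fun _ : κ => ProbabilityTheory.gaussianReal 0 1

/-!
Let `Q` be the orthogonal polar factor of `YᵀX` (obtained from an SVD), so that `QᵀYᵀX` is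
positive semidefinite and `E = X - YQ` realizes `d_F(X, Y)`. Then
`LX - (LY)Q = (ZAAᵀ(ZᵀE) + σΔE) / (n‖A‖²)`, and the noise part costs `σ‖Δ‖‖E‖_F`.
For the signal part, `XᵀX = YᵀY = n I` and the symmetry of `QᵀYᵀX` give `YᵀE = -½ Q EᵀE`,
so `‖YᵀE‖_F ≤ ‖E‖_F² / 2`; with `R` aligning `Y` to `Z`, `ZᵀE = (Z - YRᵀ)ᵀE + R YᵀE`, and
inside `N_ε` both pieces are at most `ε√(nd)‖E‖_F`.
-/

section FrobeniusNorm

attribute [local instance] Matrix.frobeniusNormedAddCommGroup Matrix.frobeniusNormedSpace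

variable {α β γ : Type*} [Fintype α] [Fintype β] [Fintype γ]

theorem frob_eq_norm (X : Matrix α β ℝ) : frob X = ‖X‖ := by
  rw [frobenius_norm_def, ← Real.sqrt_eq_rpow, frob]
  simp_rw [Real.norm_eq_abs, Real.rpow_two, sq_abs]

theorem frob_nonneg (X : Matrix α β ℝ) : 0 ≤ frob X := Real.sqrt_nonneg _

theorem frob_add_le (X Y : Matrix α β ℝ) : frob (X + Y) ≤ frob X + frob Y := by
  simpa only [frob_eq_norm] using norm_add_le X Y

theorem frob_sub_comm (X Y : Matrix α β ℝ) : frob (X - Y) = frob (Y - X) := by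
  simpa only [frob_eq_norm] using norm_sub_rev X Y

theorem frob_neg (X : Matrix α β ℝ) : frob (-X) = frob X := by
  simp only [frob_eq_norm, norm_neg]

theorem frob_smul (c : ℝ) (X : Matrix α β ℝ) : frob (c • X) = |c| * frob X := by
  simp only [frob_eq_norm, norm_smul, Real.norm_eq_abs]

theorem frob_transpose (X : Matrix α β ℝ) : frob Xᵀ = frob X := by
  simp only [frob_eq_norm, frobenius_norm_transpose]

theorem frob_mul_le (X : Matrix α β ℝ) (Y : Matrix β γ ℝ) : frob (X * Y) ≤ frob X * frob Y := by
  simp only [frob_eq_norm, frobenius_norm_mul]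

end FrobeniusNorm

section OperatorNorm

open scoped Matrix.Norms.L2Operator

variable {α β γ : Type*} [Fintype α] [Fintype β] [Fintype γ]

theorem vnorm_eq_norm (v : β → ℝ) : vnorm v = ‖WithLp.toLp 2 v‖ := by
  simp [vnorm, EuclideanSpace.norm_eq]

theorem opNorm_eq_norm [DecidableEq β] (X : Matrix α β ℝ) : opNorm X = ‖X‖ := by
  rw [l2_opNorm_def, ← ContinuousLinearMap.sSup_sphere_eq_norm, opNorm]
  congr 1
  ext r
  constructor
  · rintro ⟨u, hu, rfl⟩
    refine ⟨WithLp.toLp 2 u, by simpa [vnorm_eq_norm] using hu, ?_⟩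
    simp [vnorm_eq_norm]
  · rintro ⟨u, hu, rfl⟩
    refine ⟨u.ofLp, by simpa [vnorm_eq_norm] using hu, ?_⟩
    simp [vnorm_eq_norm, toLpLin_apply]

theorem opNorm_nonneg (X : Matrix α β ℝ) : 0 ≤ opNorm X := by
  classical
  exact (opNorm_eq_norm X).symm ▸ norm_nonneg X

theorem opNorm_add_le (X Y : Matrix α β ℝ) : opNorm (X + Y) ≤ opNorm X + opNorm Y := by
  classical
  simpa only [opNorm_eq_norm] using norm_add_le X Y

theorem opNorm_smul (c : ℝ) (X : Matrix α β ℝ) : opNorm (c • X) = |c| * opNorm X := by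
  classical
  simp only [opNorm_eq_norm, norm_smul, Real.norm_eq_abs]

theorem opNorm_mul_le (X : Matrix α β ℝ) (Y : Matrix β γ ℝ) :
    opNorm (X * Y) ≤ opNorm X * opNorm Y := by
  classical
  simpa only [opNorm_eq_norm] using l2_opNorm_mul X Y

theorem opNorm_transpose (X : Matrix α β ℝ) : opNorm Xᵀ = opNorm X := by
  classical
  rw [opNorm_eq_norm, opNorm_eq_norm, ← conjTranspose_eq_transpose_of_trivial,
    l2_opNorm_conjTranspose]

theorem vnorm_mulVec_le (X : Matrix α β ℝ) (u : β → ℝ) :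
    vnorm (X *ᵥ u) ≤ opNorm X * vnorm u := by
  classical
  rw [vnorm_eq_norm, vnorm_eq_norm, opNorm_eq_norm]
  exact l2_opNorm_mulVec X (WithLp.toLp 2 u)

theorem opNorm_le_sqrt_of_transpose_mul_self [DecidableEq β] {X : Matrix α β ℝ} {c : ℝ} (hc : 0 ≤ c)
    (hX : Xᵀ * X = c • 1) : opNorm X ≤ √c := by
  have h : opNorm X * opNorm X ≤ c := by
    rw [opNorm_eq_norm, ← l2_opNorm_conjTranspose_mul_self, conjTranspose_eq_transpose_of_trivial,
      hX, smul_one_eq_diagonal, l2_opNorm_diagonal]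
    exact pi_norm_le_iff_of_nonneg hc |>.2 fun _ => (Real.norm_of_nonneg hc).le
  exact Real.le_sqrt_of_sq_le (by nlinarith [opNorm_nonneg X])

theorem opNorm_pos_of_sigmaMin_pos {X : Matrix α β ℝ} (hX : 0 < sigmaMin X) : 0 < opNorm X := by
  obtain ⟨u, hu⟩ : ∃ u : α → ℝ, vnorm u = 1 := by
    by_contra! h
    simp [sigmaMin, h] at hX
  calc 0 < sigmaMin X := hX
    _ ≤ vnorm (u ᵥ* X) :=
      csInf_le ⟨0, by rintro _ ⟨v, -, rfl⟩; exact Real.sqrt_nonneg _⟩ ⟨u, hu, rfl⟩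
    _ = vnorm (Xᵀ *ᵥ u) := by rw [mulVec_transpose]
    _ ≤ opNorm X := by simpa [hu, opNorm_transpose] using vnorm_mulVec_le Xᵀ u

theorem sq_frob_eq_sum_sq_vnorm (M : Matrix α β ℝ) : frob M ^ 2 = ∑ i, vnorm (M i) ^ 2 := by
  simp only [frob, vnorm]
  rw [Real.sq_sqrt (by positivity)]
  exact Finset.sum_congr rfl fun i _ => (Real.sq_sqrt (by positivity)).symm

theorem frob_mul_le_opNorm_mul_frob (X : Matrix α β ℝ) (B : Matrix β γ ℝ) : frob (X * B) ≤ opNorm X * frob B := by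
  have hcol : ∀ j, (X * B)ᵀ j = X *ᵥ Bᵀ j := fun j => by
    ext i; simp [mul_apply, mulVec, dotProduct]
  refine (sq_le_sq₀ (frob_nonneg _) (mul_nonneg (opNorm_nonneg X) (frob_nonneg B))).1 ?_
  calc frob (X * B) ^ 2 = ∑ j, vnorm (X *ᵥ Bᵀ j) ^ 2 := by
        rw [← frob_transpose, sq_frob_eq_sum_sq_vnorm]; simp only [hcol]
    _ ≤ ∑ j, (opNorm X * vnorm (Bᵀ j)) ^ 2 := by
        gcongr with j
        · exact Real.sqrt_nonneg _
        · exact vnorm_mulVec_le X _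
    _ = (opNorm X * frob B) ^ 2 := by
        rw [mul_pow, ← frob_transpose B, sq_frob_eq_sum_sq_vnorm, Finset.mul_sum]
        simp only [mul_pow]

theorem opNorm_mul_mul_le {δ : Type*} [Fintype δ] (X : Matrix α β ℝ) (Y : Matrix β γ ℝ) (Z : Matrix γ δ ℝ) :
    opNorm (X * Y * Z) ≤ opNorm X * opNorm Y * opNorm Z :=
  (opNorm_mul_le _ Z).trans <|
    mul_le_mul_of_nonneg_right (opNorm_mul_le X Y) (opNorm_nonneg Z)

end OperatorNorm

section Orthogonal

variable {α β : Type*} [Fintype α] [Fintype β] {d : ℕ}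

theorem isOrth_one : IsOrth (1 : Matrix (Fin d) (Fin d) ℝ) := by
  simp [IsOrth]

theorem IsOrth.transpose {Q : Matrix (Fin d) (Fin d) ℝ} (hQ : IsOrth Q) : IsOrth Qᵀ := by
  simpa only [IsOrth, transpose_transpose, and_comm] using hQ

theorem IsOrth.mul {P Q : Matrix (Fin d) (Fin d) ℝ} (hP : IsOrth P) (hQ : IsOrth Q) :
    IsOrth (P * Q) := by
  constructor
  · rw [transpose_mul, Matrix.mul_assoc, ← Matrix.mul_assoc Pᵀ, hP.1, Matrix.one_mul, hQ.1]
  · rw [transpose_mul, Matrix.mul_assoc, ← Matrix.mul_assoc Q, hQ.2, Matrix.one_mul, hP.2]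

theorem IsOrth.opNorm_le_one {Q : Matrix (Fin d) (Fin d) ℝ} (hQ : IsOrth Q) : opNorm Q ≤ 1 := by
  simpa using opNorm_le_sqrt_of_transpose_mul_self zero_le_one (hQ.1.trans (one_smul ℝ _).symm)

theorem frob_isOrth_mul {Q : Matrix (Fin d) (Fin d) ℝ} (hQ : IsOrth Q) (N : Matrix (Fin d) β ℝ) :
    frob (Q * N) = frob N := by
  have key : ∀ {P : Matrix (Fin d) (Fin d) ℝ}, IsOrth P → ∀ N : Matrix (Fin d) β ℝ,
      frob (P * N) ≤ frob N := fun hP N =>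
    (frob_mul_le_opNorm_mul_frob _ N).trans
      (mul_le_of_le_one_left (frob_nonneg N) hP.opNorm_le_one)
  refine le_antisymm (key hQ N) ?_
  simpa only [← Matrix.mul_assoc, hQ.1, Matrix.one_mul] using key hQ.transpose (Q * N)

theorem frob_mul_isOrth (N : Matrix α (Fin d) ℝ) {Q : Matrix (Fin d) (Fin d) ℝ} (hQ : IsOrth Q) :
    frob (N * Q) = frob N := by
  rw [← frob_transpose, transpose_mul, frob_isOrth_mul hQ.transpose, frob_transpose]

theorem isOrth_toMatrix (b : OrthonormalBasis (Fin d) ℝ (EuclideanSpace ℝ (Fin d))) :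
    IsOrth ((EuclideanSpace.basisFun (Fin d) ℝ).toBasis.toMatrix b) := by
  simp only [IsOrth, ← conjTranspose_eq_transpose_of_trivial,
    OrthonormalBasis.toMatrix_orthonormalBasis_conjTranspose_mul_self,
    OrthonormalBasis.toMatrix_orthonormalBasis_self_mul_conjTranspose, and_self]

end Orthogonal

section Trace

variable {α β : Type*} [Fintype α] [Fintype β] {d : ℕ}

theorem sq_frob_eq_trace (X : Matrix α β ℝ) : frob X ^ 2 = trace (Xᵀ * X) := by
  rw [frob, Real.sq_sqrt (by positivity), Finset.sum_comm]
  simp [trace, mul_apply, sq]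

theorem trace_transpose_mul_le (X Y : Matrix α β ℝ) : trace (Xᵀ * Y) ≤ frob X * frob Y := by
  have h : trace (Xᵀ * Y) = ∑ p : α × β, X p.1 p.2 * Y p.1 p.2 := by
    rw [Fintype.sum_prod_type, Finset.sum_comm]; simp [trace, mul_apply]
  have hfrob : ∀ Z : Matrix α β ℝ, frob Z = √(∑ p : α × β, Z p.1 p.2 ^ 2) := fun Z => by
    rw [frob, Fintype.sum_prod_type]
  rw [h, hfrob, hfrob, ← Real.sqrt_mul (by positivity)]
  exact Real.le_sqrt_of_sq_le (Finset.sum_mul_sq_le_sq_mul_sq _ _ _)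

theorem sq_frob_sub (X Y : Matrix α β ℝ) :
    frob (X - Y) ^ 2 = frob X ^ 2 + frob Y ^ 2 - 2 * trace (Yᵀ * X) := by
  have : trace (Xᵀ * Y) = trace (Yᵀ * X) := by
    rw [← trace_transpose, transpose_mul, transpose_transpose]
  simp only [sq_frob_eq_trace, transpose_sub, Matrix.sub_mul, Matrix.mul_sub, trace_sub, this]
  ring

open scoped MatrixOrder in
theorem trace_mul_le_trace_of_posSemidef {P H : Matrix (Fin d) (Fin d) ℝ} (hP : IsOrth P)
    (hH : H.PosSemidef) : trace (P * H) ≤ trace H := by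
  obtain ⟨B, rfl⟩ := CStarAlgebra.nonneg_iff_eq_star_mul_self.mp hH.nonneg
  rw [star_eq_conjTranspose, conjTranspose_eq_transpose_of_trivial]
  calc trace (P * (Bᵀ * B)) = trace (Bᵀᵀ * (P * Bᵀ)) := by
        rw [transpose_transpose, ← Matrix.mul_assoc, trace_mul_comm]
    _ ≤ frob Bᵀ * frob (P * Bᵀ) := trace_transpose_mul_le _ _
    _ = trace (Bᵀ * B) := by rw [frob_isOrth_mul hP, ← sq, frob_transpose, sq_frob_eq_trace]

end Trace

section Polar

variable {d : ℕ}

theorem exists_isOrth_mul_eq_mul_diagonal (M : Matrix (Fin d) (Fin d) ℝ) :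
    ∃ U V : Matrix (Fin d) (Fin d) ℝ, IsOrth U ∧ IsOrth V ∧
      ∃ s : Fin d → ℝ, 0 ≤ s ∧ M * V = U * diagonal s := by
  have hH : (Mᵀ * M).IsHermitian := by
    simpa only [conjTranspose_eq_transpose_of_trivial] using isHermitian_conjTranspose_mul_self M
  set e := hH.eigenvectorBasis
  -- the images of an eigenbasis of `MᵀM` are orthogonal; normalizing them and completing
  -- gives the left singular vectors
  set f : Fin d → EuclideanSpace ℝ (Fin d) := fun j => WithLp.toLp 2 (M *ᵥ e j)
  have he : ∀ j, (Mᵀ * M) *ᵥ e j = hH.eigenvalues j • e j := hH.mulVec_eigenvectorBasis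
  have hf : Pairwise fun i j => inner ℝ (f i) (f j) = 0 := fun i j hij => by
    have h := congrArg (e j ⬝ᵥ ·) (he i)
    simp only [← mulVec_mulVec, dotProduct_mulVec, vecMul_transpose] at h
    simp only [f, EuclideanSpace.inner_eq_star_dotProduct, star_trivial]
    rw [dotProduct_mulVec, h, dotProduct_smul]
    simpa [EuclideanSpace.inner_eq_star_dotProduct] using Or.inr (e.orthonormal.2 hij)
  set b := InnerProductSpace.gramSchmidtOrthonormalBasis (𝕜 := ℝ) (by simp) f
  have hfb : ∀ j, f j = ‖f j‖ • b j := fun j => by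
    by_cases h : f j = 0
    · simp [h]
    · rw [InnerProductSpace.gramSchmidtOrthonormalBasis_apply_of_orthogonal _ hf h, smul_smul]
      simp [h]
  refine ⟨_, _, isOrth_toMatrix b, isOrth_toMatrix e, fun j => ‖f j‖, fun j => norm_nonneg _, ?_⟩
  ext k j
  have := congrArg (fun v => v k) (congrArg WithLp.ofLp (hfb j))
  rw [mul_diagonal]
  simpa [f, Module.Basis.toMatrix_apply, mul_apply, mulVec, dotProduct, mul_comm] using this

theorem exists_isOrth_posSemidef_transpose_mul (M : Matrix (Fin d) (Fin d) ℝ) :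
    ∃ Q : Matrix (Fin d) (Fin d) ℝ, IsOrth Q ∧ (Qᵀ * M).PosSemidef := by
  obtain ⟨U, V, hU, hV, s, hs, hMV⟩ := exists_isOrth_mul_eq_mul_diagonal M
  refine ⟨U * Vᵀ, hU.mul hV.transpose, ?_⟩
  have : (U * Vᵀ)ᵀ * M = V * diagonal s * Vᵀ := calc
    (U * Vᵀ)ᵀ * M = V * Uᵀ * (M * V * Vᵀ) := by
      rw [transpose_mul, transpose_transpose, Matrix.mul_assoc M, hV.2, Matrix.mul_one]
    _ = V * (Uᵀ * U) * diagonal s * Vᵀ := by rw [hMV]; simp only [Matrix.mul_assoc]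
    _ = V * diagonal s * Vᵀ := by rw [hU.1, Matrix.mul_one]
  rw [this, ← conjTranspose_eq_transpose_of_trivial]
  exact (PosSemidef.diagonal hs).mul_mul_conjTranspose_same V

end Polar

section Procrustes

variable {α β : Type*} [Fintype α] [Fintype β] {n d : ℕ}

theorem dF_le (X Y : Matrix (Fin n × Fin d) (Fin d) ℝ) {Q : Matrix (Fin d) (Fin d) ℝ}
    (hQ : IsOrth Q) : dF X Y ≤ frob (X - Y * Q) :=
  csInf_le ⟨0, by rintro _ ⟨_, -, rfl⟩; exact frob_nonneg _⟩ ⟨Q, hQ, rfl⟩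

theorem le_dF {X Y : Matrix (Fin n × Fin d) (Fin d) ℝ} {r : ℝ}
    (h : ∀ Q : Matrix (Fin d) (Fin d) ℝ, IsOrth Q → r ≤ frob (X - Y * Q)) : r ≤ dF X Y :=
  le_csInf ⟨_, 1, isOrth_one, rfl⟩ <| by rintro _ ⟨Q, hQ, rfl⟩; exact h Q hQ

theorem dF_le_add (X Y W : Matrix (Fin n × Fin d) (Fin d) ℝ) : dF X Y ≤ dF X W + dF Y W := by
  have key : ∀ R₁ R₂ : Matrix (Fin d) (Fin d) ℝ, IsOrth R₁ → IsOrth R₂ →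
      dF X Y ≤ frob (X - W * R₁) + frob (Y - W * R₂) := fun R₁ R₂ h₁ h₂ => calc
    dF X Y ≤ frob (X - Y * (R₂ᵀ * R₁)) := dF_le X Y (h₂.transpose.mul h₁)
    _ ≤ frob (X - W * R₁) + frob ((W * R₂ - Y) * (R₂ᵀ * R₁)) := by
      convert frob_add_le (X - W * R₁) ((W * R₂ - Y) * (R₂ᵀ * R₁)) using 2
      rw [Matrix.sub_mul, Matrix.mul_assoc W R₂, ← Matrix.mul_assoc R₂, h₂.2, Matrix.one_mul]
      abel
    _ = frob (X - W * R₁) + frob (Y - W * R₂) := by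
      rw [frob_mul_isOrth _ (h₂.transpose.mul h₁), frob_sub_comm (W * R₂)]
  have : dF X Y - dF Y W ≤ dF X W := le_dF fun R₁ h₁ => by
    have : dF X Y - frob (X - W * R₁) ≤ dF Y W := le_dF fun R₂ h₂ => by
      linarith [key R₁ R₂ h₁ h₂]
    linarith
  linarith

theorem frob_sub_mul_eq_dF_of_posSemidef {X Y : Matrix (Fin n × Fin d) (Fin d) ℝ}
    {Q : Matrix (Fin d) (Fin d) ℝ} (hQ : IsOrth Q) (hH : (Qᵀ * (Yᵀ * X)).PosSemidef) :
    frob (X - Y * Q) = dF X Y := by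
  refine le_antisymm (le_dF fun Q' hQ' => ?_) (dF_le X Y hQ)
  have htr : trace ((Y * Q')ᵀ * X) ≤ trace ((Y * Q)ᵀ * X) := by
    have := trace_mul_le_trace_of_posSemidef (hQ'.transpose.mul hQ) hH
    rwa [Matrix.mul_assoc, ← Matrix.mul_assoc Q, hQ.2, Matrix.one_mul, ← Matrix.mul_assoc,
      ← transpose_mul, ← Matrix.mul_assoc, ← transpose_mul] at this
  refine (sq_le_sq₀ (frob_nonneg _) (frob_nonneg _)).1 ?_
  rw [sq_frob_sub, sq_frob_sub, frob_mul_isOrth Y hQ, frob_mul_isOrth Y hQ']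
  linarith

theorem frob_transpose_mul_sub_mul_le {X Y : Matrix α (Fin d) ℝ} {Q : Matrix (Fin d) (Fin d) ℝ}
    {c : ℝ} (hX : Xᵀ * X = c • 1) (hY : Yᵀ * Y = c • 1) (hQ : IsOrth Q)
    (hH : (Qᵀ * (Yᵀ * X)).IsHermitian) :
    frob (Yᵀ * (X - Y * Q)) ≤ frob (X - Y * Q) ^ 2 / 2 := by
  have hYQ : (Y * Q)ᵀ * (Y * Q) = c • 1 := by
    rw [transpose_mul, Matrix.mul_assoc, ← Matrix.mul_assoc Yᵀ, hY, Matrix.smul_mul,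
      Matrix.one_mul, Matrix.mul_smul, hQ.1]
  have hXYQ : Xᵀ * (Y * Q) = Qᵀ * (Yᵀ * X) := by
    simpa [conjTranspose_eq_transpose_of_trivial, Matrix.mul_assoc] using hH.eq
  have hYQX : (Y * Q)ᵀ * X = Qᵀ * (Yᵀ * X) := by rw [transpose_mul, Matrix.mul_assoc]
  have hEE : (X - Y * Q)ᵀ * (X - Y * Q) = (2 * c) • 1 - (2 : ℝ) • (Qᵀ * (Yᵀ * X)) := by
    simp only [transpose_sub, Matrix.sub_mul, Matrix.mul_sub, hX, hYQ, hXYQ, hYQX]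
    module
  have hYE : Yᵀ * (X - Y * Q) = Yᵀ * X - c • Q := by
    rw [Matrix.mul_sub, ← Matrix.mul_assoc, hY, Matrix.smul_mul, Matrix.one_mul]
  have key : (2 : ℝ) • (Yᵀ * (X - Y * Q)) = -(Q * ((X - Y * Q)ᵀ * (X - Y * Q))) := by
    rw [hEE, hYE, Matrix.mul_sub, Matrix.mul_smul, Matrix.mul_smul, Matrix.mul_one,
      ← Matrix.mul_assoc Q Qᵀ, hQ.2, Matrix.one_mul]
    module
  calc frob (Yᵀ * (X - Y * Q)) = frob ((2 : ℝ) • (Yᵀ * (X - Y * Q))) / 2 := by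
        rw [frob_smul]; norm_num
    _ = frob ((X - Y * Q)ᵀ * (X - Y * Q)) / 2 := by rw [key, frob_neg, frob_isOrth_mul hQ]
    _ ≤ frob (X - Y * Q) ^ 2 / 2 := by grw [frob_mul_le, frob_transpose, sq]

theorem frob_transpose_mul_le (Z Y : Matrix α (Fin d) ℝ) (E : Matrix α β ℝ)
    {R : Matrix (Fin d) (Fin d) ℝ} (hR : IsOrth R) :
    frob (Zᵀ * E) ≤ frob (Y - Z * R) * frob E + frob (Yᵀ * E) := by
  have hsplit : Zᵀ * E = (Z - Y * Rᵀ)ᵀ * E + R * (Yᵀ * E) := by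
    rw [transpose_sub, transpose_mul, transpose_transpose, Matrix.sub_mul, Matrix.mul_assoc]
    abel
  have hZY : frob (Z - Y * Rᵀ) = frob (Y - Z * R) := by
    rw [← frob_mul_isOrth _ hR, Matrix.sub_mul, Matrix.mul_assoc, hR.1, Matrix.mul_one,
      frob_sub_comm]
  calc frob (Zᵀ * E) ≤ frob ((Z - Y * Rᵀ)ᵀ * E) + frob (R * (Yᵀ * E)) :=
        hsplit ▸ frob_add_le _ _
    _ ≤ frob (Y - Z * R) * frob E + frob (Yᵀ * E) := by
        rw [frob_isOrth_mul hR, ← hZY, ← frob_transpose (Z - Y * Rᵀ)]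
        grw [frob_mul_le]

end Procrustes

section Blocks

variable {n d : ℕ}

theorem OrthBlocks.transpose_mul_self {S : Matrix (Fin n × Fin d) (Fin d) ℝ} (hS : OrthBlocks S) :
    Sᵀ * S = (n : ℝ) • 1 := by
  have : Sᵀ * S = ∑ i, (blk S i)ᵀ * blk S i := by
    ext a b; simp [mul_apply, Matrix.sum_apply, Fintype.sum_prod_type, blk]
  rw [this, Finset.sum_congr rfl fun i _ => (hS i).1, Finset.sum_const, Finset.card_univ,
    Fintype.card_fin, Nat.cast_smul_eq_nsmul]

theorem orthBlocks_ZStack : OrthBlocks (ZStack n d) := fun i => by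
  have : blk (ZStack n d) i = 1 := by ext a b; simp [blk, ZStack, one_apply]
  exact this ▸ isOrth_one

theorem opNorm_ZStack_le : opNorm (ZStack n d) ≤ √n :=
  opNorm_le_sqrt_of_transpose_mul_self (Nat.cast_nonneg n) orthBlocks_ZStack.transpose_mul_self

end Blocks

section Model

variable {n d m : ℕ} (A : Matrix (Fin d) (Fin m) ℝ) (W : Matrix (Fin n × Fin d) (Fin m) ℝ) (σ : ℝ)

theorem opNorm_delta_le (hσ : 0 ≤ σ) (hσW : σ * opNorm W ≤ √n * opNorm A) :
    opNorm (delta A W σ) ≤ 3 * √n * opNorm A * opNorm W := by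
  have hZ := opNorm_ZStack_le (n := n) (d := d)
  have ha := opNorm_nonneg A
  have hw := opNorm_nonneg W
  have h₁ : opNorm (W * Aᵀ * (ZStack n d)ᵀ) ≤ opNorm W * opNorm A * √n := by
    grw [opNorm_mul_mul_le, opNorm_transpose, opNorm_transpose, hZ]
  have h₂ : opNorm (ZStack n d * A * Wᵀ) ≤ √n * opNorm A * opNorm W := by
    grw [opNorm_mul_mul_le, opNorm_transpose, hZ]
  have h₃ : opNorm (σ • (W * Wᵀ)) ≤ √n * opNorm A * opNorm W := calc
    _ ≤ σ * opNorm W * opNorm W := by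
      grw [opNorm_smul, abs_of_nonneg hσ, opNorm_mul_le, opNorm_transpose, mul_assoc]
    _ ≤ √n * opNorm A * opNorm W := by grw [hσW]
  grw [delta, opNorm_add_le, opNorm_add_le, h₁, h₂, h₃]
  linarith

theorem Lop_sub_mul (X Y : Matrix (Fin n × Fin d) (Fin d) ℝ) (Q : Matrix (Fin d) (Fin d) ℝ) :
    Lop A W σ X - Lop A W σ Y * Q = ((n : ℝ) * opNorm A ^ 2)⁻¹ •
      (ZStack n d * A * Aᵀ * ((ZStack n d)ᵀ * (X - Y * Q)) + σ • (delta A W σ * (X - Y * Q))) := by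
  rw [Lop, Lop, Matrix.smul_mul, ← smul_sub]
  congr 1
  simp only [Matrix.add_mul, Matrix.smul_mul, Matrix.mul_sub, Matrix.mul_assoc, smul_sub]
  abel

end Model

theorem exists_frob_ZStack_transpose_mul_le {n d : ℕ} {ε : ℝ}
    {X Y : Matrix (Fin n × Fin d) (Fin d) ℝ} (hX : memNeps ε X) (hY : memNeps ε Y) :
    ∃ Q : Matrix (Fin d) (Fin d) ℝ, IsOrth Q ∧ frob (X - Y * Q) = dF X Y ∧
      frob ((ZStack n d)ᵀ * (X - Y * Q)) ≤ 2 * ε * √(n * d) * frob (X - Y * Q) := by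
  obtain ⟨Q, hQ, hXY⟩ := exists_isOrth_posSemidef_transpose_mul (Yᵀ * X)
  obtain ⟨R, hR, hYZ⟩ := exists_isOrth_posSemidef_transpose_mul ((ZStack n d)ᵀ * Y)
  have hE := frob_sub_mul_eq_dF_of_posSemidef hQ hXY
  have hYE := frob_transpose_mul_sub_mul_le hX.1.transpose_mul_self hY.1.transpose_mul_self hQ
    hXY.isHermitian
  have hdF : frob (X - Y * Q) ≤ 2 * ε * √(n * d) := by
    linarith [dF_le_add X Y (ZStack n d), hX.2, hY.2]
  have hF := frob_nonneg (X - Y * Q)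
  refine ⟨Q, hQ, hE, ?_⟩
  calc frob ((ZStack n d)ᵀ * (X - Y * Q))
      ≤ frob (Y - ZStack n d * R) * frob (X - Y * Q) + frob (Yᵀ * (X - Y * Q)) :=
        frob_transpose_mul_le _ _ _ hR
    _ ≤ ε * √(n * d) * frob (X - Y * Q) + frob (X - Y * Q) * frob (X - Y * Q) / 2 := by
        rw [frob_sub_mul_eq_dF_of_posSemidef hR hYZ, ← sq]
        grw [hY.2, hYE]
    _ ≤ 2 * ε * √(n * d) * frob (X - Y * Q) := by nlinarith

theorem Lop_contraction_general (n d m : ℕ) (hn : 1 ≤ n)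
    (A : Matrix (Fin d) (Fin m) ℝ) (hA : 0 < sigmaMin A)
    (W : Matrix (Fin n × Fin d) (Fin m) ℝ) (σ : ℝ) (hσ : 0 < σ)
    (hσW : σ * opNorm W ≤ Real.sqrt (n : ℝ) * opNorm A) :
    opNorm (delta A W σ) ≤ 3 * Real.sqrt (n : ℝ) * opNorm A * opNorm W ∧
    ∀ ε : ℝ, 0 < ε → ∀ X Y : Matrix (Fin n × Fin d) (Fin d) ℝ,
      memNeps ε X → memNeps ε Y →
      dF (Lop A W σ X) (Lop A W σ Y) ≤
        (2 * ε * Real.sqrt (d : ℝ) +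
          3 * σ * opNorm W / (Real.sqrt (n : ℝ) * opNorm A)) * dF X Y := by
  have hΔ := opNorm_delta_le A W σ hσ.le hσW
  refine ⟨hΔ, fun ε _ X Y hX hY => ?_⟩
  obtain ⟨Q, hQ, hE, hZE⟩ := exists_frob_ZStack_transpose_mul_le hX hY
  have ha := opNorm_pos_of_sigmaMin_pos hA
  have hn' : (0 : ℝ) < n := by exact_mod_cast hn
  have hZAA : opNorm (ZStack n d * A * Aᵀ) ≤ √n * opNorm A * opNorm A := by
    grw [opNorm_mul_mul_le, opNorm_transpose, opNorm_ZStack_le]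
  calc dF (Lop A W σ X) (Lop A W σ Y) ≤ frob (Lop A W σ X - Lop A W σ Y * Q) := dF_le _ _ hQ
    _ ≤ ((n : ℝ) * opNorm A ^ 2)⁻¹ * (√n * opNorm A * opNorm A *
          (2 * ε * √(n * d) * frob (X - Y * Q)) +
          σ * (3 * √n * opNorm A * opNorm W * frob (X - Y * Q))) := by
      have hF := frob_nonneg (X - Y * Q)
      have hZF := frob_nonneg ((ZStack n d)ᵀ * (X - Y * Q))
      rw [Lop_sub_mul, frob_smul, abs_of_pos (by positivity)]
      grw [frob_add_le, frob_smul, abs_of_pos hσ, frob_mul_le_opNorm_mul_frob (ZStack n d * A * Aᵀ),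
        frob_mul_le_opNorm_mul_frob (delta A W σ), hZAA, hZE, hΔ]
    _ = _ := by
      rw [← hE, Real.sqrt_mul hn'.le]
      field_simp
      rw [Real.sq_sqrt hn'.le]

/-- Lemma 5.2: if σ‖W‖ ≤ √n‖A‖ then ‖Δ‖ ≤ 3√n‖A‖‖W‖, and L is a contraction:
for X, Y ∈ N_ε, d_F(LX, LY) ≤ (2ε√d + 3σ‖W‖/(√n‖A‖))·d_F(X,Y). -/
theorem Lop_contraction (n d m : ℕ) (hn : 1 ≤ n) (hd : 1 ≤ d) (hm : d ≤ m)
    (A : Matrix (Fin d) (Fin m) ℝ) (hA : 0 < sigmaMin A)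
    (W : Matrix (Fin n × Fin d) (Fin m) ℝ) (σ : ℝ) (hσ : 0 < σ)
    (hσW : σ * opNorm W ≤ Real.sqrt (n : ℝ) * opNorm A) :
    opNorm (delta A W σ) ≤ 3 * Real.sqrt (n : ℝ) * opNorm A * opNorm W ∧
    ∀ ε : ℝ, 0 < ε → ∀ X Y : Matrix (Fin n × Fin d) (Fin d) ℝ,
      memNeps ε X → memNeps ε Y →
      dF (Lop A W σ X) (Lop A W σ Y) ≤
        (2 * ε * Real.sqrt (d : ℝ) +
          3 * σ * opNorm W / (Real.sqrt (n : ℝ) * opNorm A)) * dF X Y :=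
  Lop_contraction_general n d m hn A hA W σ hσ hσW

end GOPP
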